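/- For all integers n ≥ 1 and 1 ≤ l ≤ n, the polynomial identity Σ_{λ: |λ| = n, ℓ(λ) = l} t^{2n(λ)} · [l choose m_1(λ), m_2(λ), …, m_n(λ)]_t = t^{l(l−1)} [n−1 choose l−1]_t holds in ℤ[t], where the sum is over all partitions of n with exactly l nonzero parts. -/

import Mathlib

open scoped BigOperators

/-- A partition: a weakly decreasing, finitely supported sequence of
nonnegative integers, indexed from `0` (so `parts 0` is `λ₁`). -/
structure Ptn where
  parts : ℕ → ℕ
  antitone' : Antitone parts
  exists_zero : ∃ N, parts N = 0

namespace Ptn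

/-- `|λ| = Σᵢ λᵢ`. -/
noncomputable def size (l : Ptn) : ℕ := ∑ᶠ j, l.parts j

/-- `ℓ(λ)`, the number of nonzero parts. -/
noncomputable def len (l : Ptn) : ℕ := Set.ncard {j | l.parts j ≠ 0}

/-- `n(λ) = Σᵢ (i-1) λᵢ` (with 1-based `i`). -/
noncomputable def nstat (l : Ptn) : ℕ := ∑ᶠ j, j * l.parts j

/-- `λ'ᵢ = #{j : λⱼ ≥ i}`, the transpose partition (meaningful for `i ≥ 1`). -/
noncomputable def conj (l : Ptn) (i : ℕ) : ℕ := Set.ncard {j | i ≤ l.parts j}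

/-- `mᵢ(λ) = #{j : λⱼ = i}` (meaningful for `i ≥ 1`). -/
noncomputable def mult (l : Ptn) (i : ℕ) : ℕ := Set.ncard {j | l.parts j = i}

/-- The partition `(1^n)`. -/
def onePow (n : ℕ) : Ptn where
  parts := fun j => if j < n then 1 else 0
  antitone' := by
    intro a b hab
    simp only
    split_ifs <;> omega
  exists_zero := ⟨n, by simp⟩

/-- The one-row partition `(n)`. -/
def single (n : ℕ) : Ptn where
  parts := fun j => if j = 0 then n else 0
  antitone' := by
    intro a b hab
    simp only
    split_ifs <;> omega
  exists_zero := ⟨n + 1, by simp⟩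

/-- The empty partition. -/
def empty : Ptn := onePow 0

end Ptn

/-- The q-Pochhammer symbol `(x;t)_n = ∏_{i=1}^n (1 - x t^{i-1})`. -/
def qPoch {K : Type*} [CommRing K] (x t : K) (n : ℕ) : K :=
  ∏ i ∈ Finset.range n, (1 - x * t ^ i)

/-- The Gaussian binomial coefficient `[n choose r]_t`, zero for `r > n`. -/
noncomputable def qBinom {K : Type*} [Field K] (t : K) (n r : ℕ) : K :=
  if r ≤ n then qPoch t t n / (qPoch t t r * qPoch t t (n - r)) else 0

/-- The Gaussian binomial coefficient with integer arguments,
zero outside `0 ≤ r ≤ n`. -/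
noncomputable def qBinomZ {K : Type*} [Field K] (t : K) (n r : ℤ) : K :=
  if 0 ≤ r ∧ r ≤ n then
    qPoch t t n.toNat / (qPoch t t r.toNat * qPoch t t (n - r).toNat)
  else 0

/-- `I_λ = ⊕ᵢ k[X]/(X^{λᵢ})`, a module over `k[X]` on which `X` acts nilpotently. -/
def Imod (k : Type*) [Field k] (l : Ptn) : Type _ :=
  ∀ i : Fin l.len, Polynomial k ⧸ Ideal.span {(Polynomial.X : Polynomial k) ^ l.parts (i : ℕ)}

noncomputable instance (k : Type*) [Field k] (l : Ptn) : AddCommGroup (Imod k l) :=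
  inferInstanceAs (AddCommGroup
    (∀ i : Fin l.len, Polynomial k ⧸ Ideal.span {(Polynomial.X : Polynomial k) ^ l.parts (i : ℕ)}))

noncomputable instance (k : Type*) [Field k] (l : Ptn) : Module (Polynomial k) (Imod k l) :=
  inferInstanceAs (Module (Polynomial k)
    (∀ i : Fin l.len, Polynomial k ⧸ Ideal.span {(Polynomial.X : Polynomial k) ^ l.parts (i : ℕ)}))

/-- The Hall number `g^λ_{μ,ν}`: the number of `k[X]`-submodules `N ⊆ I_λ` with
`N ≅ I_ν` and `I_λ/N ≅ I_μ`. -/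
noncomputable def hallNum (k : Type*) [Field k] (l m n : Ptn) : ℕ :=
  Nat.card {N : Submodule (Polynomial k) (Imod k l) //
    Nonempty ((↥N) ≃ₗ[Polynomial k] Imod k n) ∧
    Nonempty ((Imod k l ⧸ N) ≃ₗ[Polynomial k] Imod k m)}

/-- `a_λ`, the number of `k[X]`-module automorphisms of `I_λ`. -/
noncomputable def aut (k : Type*) [Field k] (l : Ptn) : ℕ :=
  Nat.card (Imod k l ≃ₗ[Polynomial k] Imod k l)

/-!
Removing the first column of a partition `λ` of `n` with `l` parts leaves a partition `μ` of
`n - l` with at most `l` parts, and every such `μ` arises exactly once. The column adds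
`0 + 1 + ⋯ + (l - 1)` to `n(λ)`, and `m₁(λ) = l - ℓ(μ)`, `mᵢ₊₁(λ) = mᵢ(μ)`, so the summand of `λ`
is `t^{l(l-1)} [l choose ℓ(μ)]_t` times that of `μ`. Hence the sum `S(n, l)` satisfies
`S(n, l) = t^{l(l-1)} Σ_j [l choose j]_t S(n - l, j)`, and by strong induction on `n` the claim
reduces to the `q`-Vandermonde identity
`Σ_{i+j=c} [m choose i]_t [N choose j]_t t^{i(N-j)} = [m+N choose c]_t`,
which follows from the Pascal rule by induction on `N`.
-/

open Finset

section QBinomial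

variable {K : Type*} [Field K] {t : K}

lemma qPoch_zero {R : Type*} [CommRing R] (x t : R) : qPoch x t 0 = 1 :=
  prod_range_zero _

lemma qPoch_succ {R : Type*} [CommRing R] (x t : R) (n : ℕ) :
    qPoch x t (n + 1) = qPoch x t n * (1 - x * t ^ n) :=
  prod_range_succ _ n

lemma qPoch_self_succ (t : K) (n : ℕ) : qPoch t t (n + 1) = qPoch t t n * (1 - t ^ (n + 1)) := by
  rw [qPoch_succ, pow_succ']

lemma one_sub_pow_succ_ne_zero (ht : ∀ k, t ^ (k + 1) ≠ 1) (k : ℕ) : 1 - t ^ (k + 1) ≠ 0 :=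
  sub_ne_zero.mpr (ht k).symm

lemma qPoch_self_ne_zero (ht : ∀ k, t ^ (k + 1) ≠ 1) (n : ℕ) : qPoch t t n ≠ 0 := by
  induction n with
  | zero => simp [qPoch_zero]
  | succ n ih => rw [qPoch_self_succ]; exact mul_ne_zero ih (one_sub_pow_succ_ne_zero ht n)

lemma qBinom_of_le {n r : ℕ} (h : r ≤ n) :
    qBinom t n r = qPoch t t n / (qPoch t t r * qPoch t t (n - r)) :=
  if_pos h

lemma qBinom_of_lt {n r : ℕ} (h : n < r) : qBinom t n r = 0 :=
  if_neg (not_le.mpr h)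

lemma qBinom_zero_right (ht : ∀ k, t ^ (k + 1) ≠ 1) (n : ℕ) : qBinom t n 0 = 1 := by
  rw [qBinom_of_le n.zero_le, qPoch_zero, one_mul, Nat.sub_zero,
    div_self (qPoch_self_ne_zero ht n)]

lemma qBinom_self (ht : ∀ k, t ^ (k + 1) ≠ 1) (n : ℕ) : qBinom t n n = 1 := by
  rw [qBinom_of_le le_rfl, Nat.sub_self, qPoch_zero, mul_one, div_self (qPoch_self_ne_zero ht n)]

lemma qBinom_symm {n r : ℕ} (h : r ≤ n) : qBinom t n (n - r) = qBinom t n r := by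
  rw [qBinom_of_le h, qBinom_of_le (Nat.sub_le n r), Nat.sub_sub_self h, mul_comm]

lemma qBinom_succ_succ (ht : ∀ k, t ^ (k + 1) ≠ 1) (n k : ℕ) :
    qBinom t (n + 1) (k + 1) = qBinom t n k + t ^ (k + 1) * qBinom t n (k + 1) := by
  rcases lt_trichotomy k n with hkn | rfl | hnk
  · obtain ⟨d, rfl⟩ := Nat.exists_eq_add_of_lt hkn
    rw [qBinom_of_le (by omega), qBinom_of_le (by omega), qBinom_of_le (by omega),
      show k + d + 1 + 1 - (k + 1) = d + 1 by omega, show k + d + 1 - k = d + 1 by omega,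
      show k + d + 1 - (k + 1) = d by omega, qPoch_self_succ t (k + d + 1), qPoch_self_succ t k,
      qPoch_self_succ t d]
    have := qPoch_self_ne_zero ht k
    have := qPoch_self_ne_zero ht d
    have := one_sub_pow_succ_ne_zero ht k
    have := one_sub_pow_succ_ne_zero ht d
    field_simp
    ring
  · rw [qBinom_self ht, qBinom_self ht, qBinom_of_lt (Nat.lt_succ_self k), mul_zero, add_zero]
  · rw [qBinom_of_lt (by omega), qBinom_of_lt hnk, qBinom_of_lt (by omega), mul_zero, add_zero]

theorem qBinom_vandermonde (ht : ∀ k, t ^ (k + 1) ≠ 1) (m n c : ℕ) :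
    ∑ p ∈ antidiagonal c, qBinom t m p.1 * qBinom t n p.2 * t ^ (p.1 * (n - p.2)) =
      qBinom t (m + n) c := by
  induction n generalizing c with
  | zero =>
    rw [sum_eq_single (c, 0), qBinom_self ht, add_zero]
    · simp
    · rintro ⟨i, j⟩ hij hne
      rw [qBinom_of_lt (t := t) (Nat.pos_of_ne_zero fun hj => hne (by simp_all)), mul_zero,
        zero_mul]
    · simp
  | succ n ih =>
    cases c with
    | zero => simp [qBinom_zero_right ht]
    | succ c =>
      have hterm : ∀ p ∈ antidiagonal c,
          qBinom t m p.1 * qBinom t (n + 1) (p.2 + 1) * t ^ (p.1 * (n + 1 - (p.2 + 1))) =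
            qBinom t m p.1 * qBinom t n p.2 * t ^ (p.1 * (n - p.2)) +
              t ^ (c + 1) *
                (qBinom t m p.1 * qBinom t n (p.2 + 1) * t ^ (p.1 * (n - (p.2 + 1)))) := by
        rintro ⟨i, j⟩ hij
        rw [HasAntidiagonal.mem_antidiagonal] at hij
        rw [qBinom_succ_succ ht, Nat.add_sub_add_right]
        rcases lt_or_ge j n with hjn | hjn
        · -- exponents: `(j + 1) + i * (n - j) = (c + 1) + i * (n - (j + 1))` because `i + j = c`
          obtain ⟨d, rfl⟩ := Nat.exists_eq_add_of_lt hjn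
          rw [show j + d + 1 - j = d + 1 by omega, show j + d + 1 - (j + 1) = d by omega, ← hij]
          ring
        · rw [qBinom_of_lt (show n < j + 1 by omega)]
          ring
      rw [Nat.sum_antidiagonal_succ', sum_congr rfl hterm, sum_add_distrib, ih, ← mul_sum,
        show m + (n + 1) = m + n + 1 by ring, qBinom_succ_succ ht, ← ih (c + 1),
        Nat.sum_antidiagonal_succ', qBinom_zero_right ht, qBinom_zero_right ht, Nat.sub_zero,
        Nat.sub_zero]
      ring

lemma sum_qBinom_succ_mul_qBinom (ht : ∀ k, t ^ (k + 1) ≠ 1) (l m : ℕ) :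
    ∑ k ∈ range (l + 1), qBinom t (l + 1) (k + 1) * (t ^ ((k + 1) * k) * qBinom t m k) =
      qBinom t (l + 1 + m) l := by
  rw [add_comm (l + 1) m, ← qBinom_vandermonde ht, Nat.sum_antidiagonal_eq_sum_range_succ_mk]
  refine sum_congr rfl fun k hk => ?_
  have hkl : k ≤ l := Nat.lt_succ_iff.mp (mem_range.mp hk)
  rw [show l + 1 - (l - k) = k + 1 by omega, ← qBinom_symm (show k + 1 ≤ l + 1 by omega),
    show l + 1 - (k + 1) = l - k by omega]
  ring

end QBinomial

namespace Ptn

@[ext] lemma ext {a b : Ptn} (h : ∀ j, a.parts j = b.parts j) : a = b := by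
  cases a; cases b; simp only [mk.injEq]; exact funext h

lemma setOf_parts_ne_zero (l : Ptn) : {j | l.parts j ≠ 0} = Set.Iio (Nat.find l.exists_zero) := by
  ext j
  refine ⟨fun hj => ?_, Nat.find_min l.exists_zero⟩
  by_contra hle
  exact hj (Nat.le_zero.mp (Nat.find_spec l.exists_zero ▸ l.antitone' (not_lt.mp hle)))

lemma parts_ne_zero_iff {l : Ptn} {j : ℕ} : l.parts j ≠ 0 ↔ j < l.len := by
  have hlen : l.len = Nat.find l.exists_zero := by rw [len, setOf_parts_ne_zero, Set.ncard_Iio_nat]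
  rw [hlen, ← Set.mem_Iio, ← setOf_parts_ne_zero]
  rfl

lemma parts_eq_zero_iff {l : Ptn} {j : ℕ} : l.parts j = 0 ↔ l.len ≤ j := by
  simpa using parts_ne_zero_iff.not

lemma len_eq_of_parts_ne_zero_iff {l : Ptn} {c : ℕ} (h : ∀ j, l.parts j ≠ 0 ↔ j < c) :
    l.len = c := by
  rw [len, show {j | l.parts j ≠ 0} = Set.Iio c from Set.ext h, Set.ncard_Iio_nat]

lemma size_eq_sum_range {l : Ptn} {c : ℕ} (hc : l.len ≤ c) :
    l.size = ∑ j ∈ range c, l.parts j :=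
  finsum_eq_sum_of_support_subset _ fun j hj => by
    simpa using (parts_ne_zero_iff.mp hj).trans_le hc

lemma nstat_eq_sum_range {l : Ptn} {c : ℕ} (hc : l.len ≤ c) :
    l.nstat = ∑ j ∈ range c, j * l.parts j :=
  finsum_eq_sum_of_support_subset _ fun j hj => by
    simpa using (parts_ne_zero_iff.mp (right_ne_zero_of_mul hj)).trans_le hc

lemma parts_le_size (l : Ptn) (j : ℕ) : l.parts j ≤ l.size := by
  by_cases hj : j < l.len
  · rw [size_eq_sum_range le_rfl]
    exact single_le_sum (fun _ _ => Nat.zero_le _) (mem_range.mpr hj)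
  · rw [parts_eq_zero_iff.mpr (not_lt.mp hj)]
    exact Nat.zero_le _

lemma len_le_size (l : Ptn) : l.len ≤ l.size := by
  rw [size_eq_sum_range le_rfl]
  simpa using card_nsmul_le_sum (range l.len) l.parts 1 fun j hj =>
    Nat.one_le_iff_ne_zero.mpr (parts_ne_zero_iff.mpr (mem_range.mp hj))

lemma mult_eq_zero_of_size_lt {l : Ptn} {i : ℕ} (h : l.size < i) : l.mult i = 0 := by
  have hempty : {j | l.parts j = i} = ∅ :=
    Set.eq_empty_of_forall_notMem fun j hj => (l.parts_le_size j).not_gt (hj ▸ h)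
  rw [mult, hempty, Set.ncard_empty]

lemma finite_setOf_size_eq (n : ℕ) : {l : Ptn | l.size = n}.Finite := by
  refine Set.Finite.of_finite_image (f := fun l (j : Fin n) => l.parts j) ?_ ?_
  · refine (Set.Finite.pi (t := fun _ => Set.Iic n) fun _ => Set.finite_Iic n).subset ?_
    rintro _ ⟨l, rfl, rfl⟩ j -
    exact l.parts_le_size j
  · intro a ha b hb hab
    ext j
    by_cases hj : j < n
    · exact congrFun hab ⟨j, hj⟩
    · have := a.len_le_size
      have := b.len_le_size
      rw [parts_eq_zero_iff.mpr (by simp_all; omega), parts_eq_zero_iff.mpr (by simp_all; omega)]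

lemma empty_parts (j : ℕ) : empty.parts j = 0 := by
  simp [empty, onePow]

lemma len_empty : empty.len = 0 :=
  Nat.le_zero.mp (parts_eq_zero_iff.mp (empty_parts 0))

lemma size_empty : empty.size = 0 := by
  rw [size_eq_sum_range len_empty.le, sum_range_zero]

lemma nstat_empty : empty.nstat = 0 := by
  rw [nstat_eq_sum_range len_empty.le, sum_range_zero]

lemma eq_empty_of_size_eq_zero {l : Ptn} (h : l.size = 0) : l = empty :=
  ext fun j => by rw [empty_parts]; exact Nat.le_zero.mp (h ▸ l.parts_le_size j)

def strip (l : Ptn) : Ptn where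
  parts j := l.parts j - 1
  antitone' _ _ hab := Nat.sub_le_sub_right (l.antitone' hab) 1
  exists_zero := l.exists_zero.imp fun _ hN => by simp [hN]

/-- Adds a first column of height `c` to the Young diagram; if `c < m.len`, the rows below row `c`
are cut off. -/
def pad (m : Ptn) (c : ℕ) : Ptn where
  parts j := if j < c then m.parts j + 1 else 0
  antitone' a b hab := by
    dsimp only
    split_ifs <;> first | omega | exact Nat.succ_le_succ (m.antitone' hab)
  exists_zero := ⟨c, by simp⟩

lemma pad_parts (m : Ptn) (c j : ℕ) : (m.pad c).parts j = if j < c then m.parts j + 1 else 0 :=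
  rfl

lemma len_pad (m : Ptn) (c : ℕ) : (m.pad c).len = c :=
  len_eq_of_parts_ne_zero_iff fun j => by
    simp only [pad]
    split_ifs with hj <;> simp [hj]

lemma strip_pad {m : Ptn} {c : ℕ} (h : m.len ≤ c) : (m.pad c).strip = m := by
  ext j
  simp only [strip, pad]
  split_ifs with hj
  · rfl
  · exact (parts_eq_zero_iff.mpr (h.trans (not_lt.mp hj))).symm

lemma pad_strip (l : Ptn) : l.strip.pad l.len = l := by
  ext j
  simp only [strip, pad]
  split_ifs with hj
  · exact Nat.sub_add_cancel (Nat.one_le_iff_ne_zero.mpr (parts_ne_zero_iff.mpr hj))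
  · exact (parts_eq_zero_iff.mpr (not_lt.mp hj)).symm

lemma len_strip_le (l : Ptn) : l.strip.len ≤ l.len :=
  parts_eq_zero_iff.mp (by simp [strip, parts_eq_zero_iff.mpr le_rfl])

lemma size_pad {m : Ptn} {c : ℕ} (h : m.len ≤ c) : (m.pad c).size = m.size + c := by
  rw [size_eq_sum_range (m.len_pad c).le, size_eq_sum_range h,
    sum_congr rfl fun j hj => by rw [pad_parts, if_pos (mem_range.mp hj)], sum_add_distrib,
    sum_const, card_range, smul_eq_mul, mul_one]

lemma size_strip_add_len (l : Ptn) : l.strip.size + l.len = l.size := by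
  conv_rhs => rw [← l.pad_strip]
  exact (size_pad l.len_strip_le).symm

lemma two_mul_nstat_pad {m : Ptn} {c : ℕ} (h : m.len ≤ c) :
    2 * (m.pad c).nstat = 2 * m.nstat + c * (c - 1) := by
  rw [nstat_eq_sum_range (m.len_pad c).le, nstat_eq_sum_range h,
    sum_congr rfl fun j hj => by rw [pad_parts, if_pos (mem_range.mp hj), mul_add_one],
    sum_add_distrib, ← sum_range_id_mul_two]
  ring

lemma mult_pad_one (m : Ptn) (c : ℕ) : (m.pad c).mult 1 = c - m.len := by
  have hset : {j | (m.pad c).parts j = 1} = Set.Ico m.len c := by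
    ext j
    simp only [pad, Set.mem_ofPred_eq, Set.mem_Ico, ← parts_eq_zero_iff]
    split_ifs with hj <;> simp [hj]
  rw [mult, hset, Set.ncard_Ico_nat]

lemma mult_pad_add_two {m : Ptn} {c : ℕ} (h : m.len ≤ c) (i : ℕ) :
    (m.pad c).mult (i + 2) = m.mult (i + 1) := by
  rw [mult, mult]
  congr 1
  ext j
  simp only [pad, Set.mem_ofPred_eq]
  split_ifs with hj
  · omega
  · simp [parts_eq_zero_iff.mpr (h.trans (not_lt.mp hj))]

section Multiplicities

variable {M : Type*} [CommMonoid M] {f : ℕ → M}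

lemma finprod_mult_eq_prod_range (hf : f 0 = 1) {l : Ptn} {B : ℕ} (hB : l.size ≤ B) :
    ∏ᶠ i, f (l.mult (i + 1)) = ∏ i ∈ range B, f (l.mult (i + 1)) :=
  finprod_eq_prod_of_mulSupport_subset _ fun i hi => by
    have : ¬ l.size < i + 1 := fun hlt => hi (by simp only [mult_eq_zero_of_size_lt hlt, hf])
    simp only [coe_range, Set.mem_Iio]
    omega

lemma finprod_mult_pad (hf : f 0 = 1) {m : Ptn} {c : ℕ} (h : m.len ≤ c) :
    ∏ᶠ i, f ((m.pad c).mult (i + 1)) = f (c - m.len) * ∏ᶠ i, f (m.mult (i + 1)) := by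
  rw [finprod_mult_eq_prod_range hf ((size_pad h).le.trans (Nat.le_succ _)), prod_range_succ',
    finprod_mult_eq_prod_range hf (Nat.le_add_right m.size c), zero_add, mult_pad_one, mul_comm]
  simp only [mult_pad_add_two h]

end Multiplicities

end Ptn

section PartitionSum

variable {K : Type*} [Field K] {t : K}

noncomputable def Ptn.qMultinomial (t : K) (p : Ptn) : K :=
  qPoch t t p.len / ∏ᶠ i, qPoch t t (p.mult (i + 1))

lemma Ptn.qMultinomial_pad (ht : ∀ k, t ^ (k + 1) ≠ 1) {m : Ptn} {c : ℕ} (h : m.len ≤ c) :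
    (m.pad c).qMultinomial t = qBinom t c m.len * m.qMultinomial t := by
  have hprod : ∏ᶠ i, qPoch t t (m.mult (i + 1)) ≠ 0 :=
    finprod_induction (· ≠ 0) one_ne_zero (fun _ _ => mul_ne_zero) fun _ =>
      qPoch_self_ne_zero ht _
  have := qPoch_self_ne_zero ht m.len
  rw [qMultinomial, qMultinomial, len_pad, finprod_mult_pad (qPoch_zero t t) h, qBinom_of_le h]
  field_simp

noncomputable def partitionSum (t : K) (n l : ℕ) : K :=
  ∑ᶠ p ∈ {p : Ptn | p.size = n ∧ p.len = l}, t ^ (2 * p.nstat) * p.qMultinomial t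

lemma partitionSum_of_lt {n l : ℕ} (h : n < l) : partitionSum t n l = 0 := by
  refine finsum_mem_eq_zero_of_forall_eq_zero fun p hp => absurd p.len_le_size ?_
  rw [hp.1, hp.2]
  exact not_le.mpr h

lemma partitionSum_zero_right {n : ℕ} (hn : n ≠ 0) : partitionSum t n 0 = 0 := by
  refine finsum_mem_eq_zero_of_forall_eq_zero fun p hp => absurd hp.1 ?_
  rw [p.size_eq_sum_range hp.2.le, sum_range_zero]
  exact hn.symm

lemma partitionSum_zero_zero : partitionSum t 0 0 = 1 := by
  have hempty : {p : Ptn | p.size = 0 ∧ p.len = 0} = {Ptn.empty} := by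
    ext p
    refine ⟨fun hp => Ptn.eq_empty_of_size_eq_zero hp.1, ?_⟩
    rintro rfl
    exact ⟨Ptn.size_empty, Ptn.len_empty⟩
  have hmult (i : ℕ) : Ptn.empty.mult (i + 1) = 0 :=
    Ptn.mult_eq_zero_of_size_lt (Ptn.size_empty ▸ i.succ_pos)
  rw [partitionSum, hempty, finsum_mem_singleton, Ptn.qMultinomial, Ptn.nstat_empty, Ptn.len_empty]
  simp [hmult, qPoch_zero]

lemma partitionSum_eq_sum (ht : ∀ k, t ^ (k + 1) ≠ 1) {n l : ℕ} (hln : l ≤ n) :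
    partitionSum t n l =
      t ^ (l * (l - 1)) * ∑ j ∈ range (l + 1), qBinom t l j * partitionSum t (n - l) j := by
  set T : ℕ → Set Ptn := fun j => {p | p.size = n - l ∧ p.len = j}
  have hbij : Set.BijOn (fun μ : Ptn => μ.pad l) {μ | μ.size = n - l ∧ μ.len ≤ l}
      {p | p.size = n ∧ p.len = l} := by
    refine ⟨fun μ hμ => ⟨?_, μ.len_pad l⟩, fun μ hμ ν hν hμν => ?_,
      fun p hp => ⟨p.strip, ⟨?_, ?_⟩, ?_⟩⟩
    · rw [Ptn.size_pad hμ.2, hμ.1]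
      omega
    · calc μ = (μ.pad l).strip := (Ptn.strip_pad hμ.2).symm
        _ = (ν.pad l).strip := congrArg Ptn.strip hμν
        _ = ν := Ptn.strip_pad hν.2
    · have := p.size_strip_add_len
      rw [hp.1, hp.2] at this
      omega
    · exact hp.2 ▸ p.len_strip_le
    · exact hp.2 ▸ p.pad_strip
  have hunion :
      {μ : Ptn | μ.size = n - l ∧ μ.len ≤ l} = ⋃ j ∈ (range (l + 1) : Set ℕ), T j := by
    ext μ
    simp [T]
  have hdisj : (range (l + 1) : Set ℕ).PairwiseDisjoint T := fun i _ j _ hij =>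
    Set.disjoint_left.mpr fun μ hi hj => hij (hi.2.symm.trans hj.2)
  rw [partitionSum, ← finsum_mem_eq_of_bijOn _ hbij fun μ _ => rfl, hunion,
    finsum_mem_biUnion hdisj (finite_toSet _)
      fun j _ => (Ptn.finite_setOf_size_eq _).subset fun _ h => h.1,
    finsum_mem_coe_finset, mul_sum]
  refine sum_congr rfl fun j hj => ?_
  rw [partitionSum, mul_finsum_mem, mul_finsum_mem]
  refine finsum_mem_congr rfl fun μ hμ => ?_
  have hμl : μ.len ≤ l := hμ.2 ▸ Nat.lt_succ_iff.mp (mem_range.mp hj)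
  rw [Ptn.qMultinomial_pad ht hμl, Ptn.two_mul_nstat_pad hμl, pow_add, hμ.2]
  ring

theorem partitionSum_eq (ht : ∀ k, t ^ (k + 1) ≠ 1) {n l : ℕ} (hn : 1 ≤ n) (hl : 1 ≤ l) :
    partitionSum t n l = t ^ (l * (l - 1)) * qBinom t (n - 1) (l - 1) := by
  induction n using Nat.strong_induction_on generalizing l with
  | _ n ih =>
  rcases lt_or_ge n l with hnl | hln
  · rw [partitionSum_of_lt hnl, qBinom_of_lt (by omega), mul_zero]
  rw [partitionSum_eq_sum ht hln]
  congr 1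
  obtain ⟨l, rfl⟩ := Nat.exists_eq_add_of_le' hl
  rcases hln.eq_or_lt with rfl | hlt
  · have hvanish (j : ℕ) (hj : j ≠ 0) : qBinom t (l + 1) j * partitionSum t 0 j = 0 := by
      rw [partitionSum_of_lt (Nat.pos_of_ne_zero hj), mul_zero]
    rw [Nat.sub_self, sum_eq_single 0 (fun j _ => hvanish j) (by simp), qBinom_zero_right ht,
      partitionSum_zero_zero, mul_one, Nat.add_sub_cancel, qBinom_self ht]
  · obtain ⟨m, hm⟩ : ∃ m, n - (l + 1) = m + 1 := ⟨n - (l + 1) - 1, by omega⟩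
    have hG (k : ℕ) : partitionSum t (m + 1) (k + 1) = t ^ ((k + 1) * k) * qBinom t m k := by
      rw [ih (m + 1) (by omega) (by omega) (by omega), Nat.add_sub_cancel, Nat.add_sub_cancel]
    rw [hm, sum_range_succ', partitionSum_zero_right m.succ_ne_zero, mul_zero, add_zero]
    simp only [hG]
    rw [sum_qBinom_succ_mul_qBinom ht, show l + 1 + m = n - 1 by omega, Nat.add_sub_cancel]

end PartitionSum

lemma RatFunc.X_pow_succ_ne_one {F : Type*} [Field F] (k : ℕ) :
    (RatFunc.X : RatFunc F) ^ (k + 1) ≠ 1 := by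
  intro h
  have : (Polynomial.X : Polynomial F) ^ (k + 1) = 1 :=
    IsFractionRing.injective (Polynomial F) (RatFunc F)
      (by rwa [map_pow, map_one, RatFunc.algebraMap_X])
  simpa using congrArg Polynomial.natDegree this

/-- for all `1 ≤ l ≤ n`,
`Σ_{|λ|=n, ℓ(λ)=l} t^{2n(λ)} [l choose m₁(λ),…,m_n(λ)]_t = t^{l(l−1)} [n−1 choose l−1]_t`
(an identity of polynomials in `t`, stated in the field `ℚ(t)` of rational functions,
in which `ℤ[t]` embeds; the `t`-multinomial coefficient is
`(t;t)_l / ∏ᵢ (t;t)_{mᵢ(λ)}`). -/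
theorem multinomial_partition_identity (n l : ℕ) (hl : 1 ≤ l) (hln : l ≤ n) :
    ∑ᶠ (lam : Ptn) (_ : lam.size = n ∧ lam.len = l),
        (RatFunc.X : RatFunc ℚ) ^ (2 * lam.nstat) *
          (qPoch (RatFunc.X : RatFunc ℚ) RatFunc.X l /
            ∏ᶠ i : ℕ, qPoch (RatFunc.X : RatFunc ℚ) RatFunc.X (lam.mult (i + 1)))
      = (RatFunc.X : RatFunc ℚ) ^ (l * (l - 1)) *
          qBinom (RatFunc.X : RatFunc ℚ) (n - 1) (l - 1) := by
  rw [← partitionSum_eq RatFunc.X_pow_succ_ne_one (hl.trans hln) hl, partitionSum]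
  refine finsum_congr fun p => finsum_congr fun hp => ?_
  rw [Ptn.qMultinomial, hp.2]
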